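/- Let a ≤ −1 and γ be integers such that (xy)^a x^γ is a power of x or a power of y in Γ. Then a = −1 and γ ≡ 1 (mod α₁); moreover, in that case (xy)^{−1} x^{γ} = y^{−1} in Γ. -/

import Mathlib

/-- The free product `Γ = C_{α₁} ∗ C_{α₂}` of cyclic groups of orders `α₁` and `α₂`. -/
abbrev FPCyclic (α₁ α₂ : ℕ) :=
  Monoid.Coprod (Multiplicative (ZMod α₁)) (Multiplicative (ZMod α₂))

variable (α₁ α₂ : ℕ)

/-- The fixed generator `x` of the first factor `C_{α₁}`. -/
def xGen : FPCyclic α₁ α₂ := Monoid.Coprod.inl (Multiplicative.ofAdd (1 : ZMod α₁))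

/-- The fixed generator `y` of the second factor `C_{α₂}`. -/
def yGen : FPCyclic α₁ α₂ := Monoid.Coprod.inr (Multiplicative.ofAdd (1 : ZMod α₂))

/-! Writing `a = -n` with `n ≥ 1` and `z` for the power of `x` or `y`, the hypothesis reads
`(xy)ⁿ = x^γ z⁻¹`. Multiplying by `x^(-γ)` on the left and by `z` on the right gives
`x^(1-γ) (yx)^(n-1) y z = 1`. By the normal form theorem for free products a nonempty reduced
word is never trivial, so `n = 1`, `x^(1-γ) = 1` and `y z = 1`; in particular `z` must be a power
of `y`. -/

namespace Monoid.CoprodI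

variable {ι : Type*} {M : ι → Type*} [∀ i, Monoid (M i)]

theorem NeWord.prod_ne_one {i j : ι} (w : NeWord M i j) : w.prod ≠ 1 := by
  classical
  intro h
  have hw : w.toWord = Word.empty :=
    Word.equiv.symm.injective (h.trans Word.prod_empty.symm)
  exact w.toList_ne_nil (congrArg Word.toList hw)

theorem NeWord.exists_prod_eq_of_mul {i j l : ι} (hij : i ≠ j) (a : M i) (w : NeWord M j l) :
    ∃ (k : ι) (w' : NeWord M k l), w'.prod = of a * w.prod := by
  by_cases ha : a = 1
  · exact ⟨j, w, by rw [ha, map_one, one_mul]⟩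
  · exact ⟨i, (singleton a ha).append hij w, by rw [append_prod, prod_singleton]⟩

theorem NeWord.exists_prod_eq_mul_of {i j l : ι} (hjl : j ≠ l) (w : NeWord M i j) (b : M l) :
    ∃ (k : ι) (w' : NeWord M i k), w'.prod = w.prod * of b := by
  by_cases hb : b = 1
  · exact ⟨j, w, by rw [hb, map_one, mul_one]⟩
  · exact ⟨l, w.append hjl (singleton b hb), by rw [append_prod, prod_singleton]⟩

theorem of_mul_neWord_prod_mul_of_ne_one {i j k l : ι} (hij : i ≠ j) (hkl : k ≠ l)
    (a : M i) (w : NeWord M j k) (b : M l) : of a * w.prod * of b ≠ 1 := by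
  obtain ⟨_, w₁, hw₁⟩ := w.exists_prod_eq_of_mul hij a
  obtain ⟨_, w₂, hw₂⟩ := w₁.exists_prod_eq_mul_of hkl b
  rw [← hw₁, ← hw₂]
  exact w₂.prod_ne_one

theorem eq_one_of_of_mul_of_eq_one {i j : ι} (hij : i ≠ j) {a : M i} {b : M j}
    (h : of a * of b = 1) : a = 1 ∧ b = 1 := by
  have hb : b = 1 := by
    by_contra hb
    obtain ⟨_, w, hw⟩ := (NeWord.singleton b hb).exists_prod_eq_of_mul hij a
    rw [NeWord.prod_singleton, h] at hw
    exact w.prod_ne_one hw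
  rw [hb, map_one, mul_one] at h
  exact ⟨of_injective i (h.trans (map_one of).symm), hb⟩

theorem exists_neWord_prod_eq_pow_of_mul_of {i j : ι} (hij : i ≠ j) {u : M i} {v : M j}
    (hu : u ≠ 1) (hv : v ≠ 1) (k : ℕ) :
    ∃ w : NeWord M i j, w.prod = (of u * of v) ^ (k + 1) := by
  induction k with
  | zero =>
    exact ⟨(NeWord.singleton u hu).append hij (NeWord.singleton v hv), by simp⟩
  | succ k ih =>
    obtain ⟨w, hw⟩ := ih
    refine ⟨w.append hij.symm ((NeWord.singleton u hu).append hij (NeWord.singleton v hv)), ?_⟩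
    rw [NeWord.append_prod, NeWord.append_prod, NeWord.prod_singleton, NeWord.prod_singleton,
      hw, pow_succ _ (k + 1)]

theorem eq_of_pow_of_mul_of_eq_of_mul_of {G : ι → Type*} [∀ i, Group (G i)] {i j : ι}
    (hij : i ≠ j) {u s : G i} {v t : G j} (hu : u ≠ 1) (hv : v ≠ 1) {k : ℕ}
    (h : (of u * of v) ^ (k + 1) = of s * of t) : k = 0 ∧ s = u ∧ t = v := by
  have hcancel : of (s⁻¹ * u) * (of v * of u) ^ k * of (v * t⁻¹) = 1 := by
    have hsplit : (of u * of v) ^ (k + 1) = of u * (of v * of u) ^ k * of v := by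
      rw [pow_succ, ← mul_assoc, mul_pow_mul]
    rw [map_mul, map_mul, map_inv, map_inv]
    calc (of s)⁻¹ * of u * (of v * of u) ^ k * (of v * (of t)⁻¹)
        = (of s)⁻¹ * (of u * (of v * of u) ^ k * of v) * (of t)⁻¹ := by group
      _ = 1 := by rw [← hsplit, h]; group
  cases k with
  | zero =>
    rw [pow_zero, mul_one] at hcancel
    obtain ⟨hs, ht⟩ := eq_one_of_of_mul_of_eq_one hij hcancel
    exact ⟨rfl, inv_mul_eq_one.mp hs, (mul_inv_eq_one.mp ht).symm⟩
  | succ k =>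
    obtain ⟨w, hw⟩ := exists_neWord_prod_eq_pow_of_mul_of hij.symm hv hu k
    rw [← hw] at hcancel
    exact absurd hcancel (of_mul_neWord_prod_mul_of_ne_one hij hij _ w _)

end Monoid.CoprodI

namespace Monoid.Coprod

universe u

variable {G H : Type u} [Group G] [Group H]

instance instGroupCond : ∀ b : Bool, Group (cond b G H)
  | true => ‹Group G›
  | false => ‹Group H›

-- Reduced words are available for `CoprodI`; a homomorphism into it is enough to transport
-- the conclusions back, since they are equalities inside the factors.
def toCoprodI : G ∗ H →* CoprodI (fun b => cond b G H) :=
  lift (CoprodI.of (M := fun b => cond b G H) (i := true))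
    (CoprodI.of (M := fun b => cond b G H) (i := false))

@[simp] theorem toCoprodI_inl (g : G) : toCoprodI (inl g : G ∗ H) = CoprodI.of (i := true) g :=
  lift_apply_inl ..

@[simp] theorem toCoprodI_inr (h : H) : toCoprodI (inr h : G ∗ H) = CoprodI.of (i := false) h :=
  lift_apply_inr ..

theorem eq_of_pow_inl_mul_inr_eq_inl_mul_inr {g g' : G} {h h' : H} (hg : g ≠ 1) (hh : h ≠ 1)
    {k : ℕ} (heq : (inl g * inr h : G ∗ H) ^ (k + 1) = inl g' * inr h') :
    k = 0 ∧ g' = g ∧ h' = h := by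
  have := congrArg toCoprodI heq
  simp only [map_pow, map_mul, toCoprodI_inl, toCoprodI_inr] at this
  exact CoprodI.eq_of_pow_of_mul_of_eq_of_mul_of (by decide) hg hh this

theorem pow_inl_mul_inr_ne_inl {g g' : G} {h : H} (hg : g ≠ 1) (hh : h ≠ 1) (k : ℕ) :
    (inl g * inr h : G ∗ H) ^ (k + 1) ≠ inl g' := fun heq =>
  hh (eq_of_pow_inl_mul_inr_eq_inl_mul_inr hg hh (g' := g') (h' := 1)
    (by rw [heq, map_one, mul_one])).2.2.symm

end Monoid.Coprod

theorem ZMod.ofAdd_one_ne_one {n : ℕ} (hn : 2 ≤ n) : Multiplicative.ofAdd (1 : ZMod n) ≠ 1 := by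
  have : Fact (1 < n) := ⟨hn⟩
  exact fun h => one_ne_zero (ofAdd_eq_one.mp h)

theorem ZMod.ofAdd_one_zpow_eq_self_iff {n : ℕ} (c : ℤ) :
    Multiplicative.ofAdd (1 : ZMod n) ^ c = Multiplicative.ofAdd 1 ↔ (n : ℤ) ∣ c - 1 := by
  rw [← ofAdd_zsmul, zsmul_one, Multiplicative.ofAdd.injective.eq_iff, eq_comm, ← Int.cast_one,
    ZMod.intCast_eq_intCast_iff_dvd_sub]

/-- If `a ≤ −1` and `(xy)^a x^γ` is a power of `x` or a power of `y` in `Γ`, then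
`a = −1` and `γ ≡ 1 (mod α₁)`; moreover in that case `(xy)^{−1} x^γ = y⁻¹`. -/
theorem statement7 (hα₁ : 2 ≤ α₁) (hα₂ : 2 ≤ α₂) (a γ : ℤ)
    (ha : a ≤ -1)
    (hpow : ∃ m : ℤ,
      (xGen α₁ α₂ * yGen α₁ α₂) ^ a * xGen α₁ α₂ ^ γ = xGen α₁ α₂ ^ m ∨
      (xGen α₁ α₂ * yGen α₁ α₂) ^ a * xGen α₁ α₂ ^ γ = yGen α₁ α₂ ^ m) :
    a = -1 ∧ ((α₁ : ℤ) ∣ (γ - 1)) ∧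
      (xGen α₁ α₂ * yGen α₁ α₂)⁻¹ * xGen α₁ α₂ ^ γ = (yGen α₁ α₂)⁻¹ := by
  obtain ⟨k, rfl⟩ : ∃ k : ℕ, a = -(k + 1 : ℕ) := ⟨(-a - 1).toNat, by omega⟩
  have hsolve {z : FPCyclic α₁ α₂}
      (hz : (xGen α₁ α₂ * yGen α₁ α₂) ^ (-(k + 1 : ℕ) : ℤ) * xGen α₁ α₂ ^ γ = z) :
      (xGen α₁ α₂ * yGen α₁ α₂) ^ (k + 1) = xGen α₁ α₂ ^ γ * z⁻¹ := by
    rw [← hz]; group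
  obtain ⟨m, hm | hm⟩ := hpow
  · refine absurd (hsolve hm) ?_
    simp only [xGen, yGen, ← map_zpow, ← map_inv, ← map_mul]
    exact Monoid.Coprod.pow_inl_mul_inr_ne_inl
      (ZMod.ofAdd_one_ne_one hα₁) (ZMod.ofAdd_one_ne_one hα₂) k
  · have hpow_eq := hsolve hm
    simp only [xGen, yGen, ← map_zpow, ← map_inv] at hpow_eq
    obtain ⟨rfl, hγ, -⟩ := Monoid.Coprod.eq_of_pow_inl_mul_inr_eq_inl_mul_inr
      (ZMod.ofAdd_one_ne_one hα₁) (ZMod.ofAdd_one_ne_one hα₂) hpow_eq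
    have hxγ : xGen α₁ α₂ ^ γ = xGen α₁ α₂ := by rw [xGen, ← map_zpow, hγ]
    refine ⟨rfl, (ZMod.ofAdd_one_zpow_eq_self_iff γ).mp hγ, ?_⟩
    rw [hxγ]; group
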